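/- Let ℓ be an odd prime and let A be a nontrivial finite subgroup of SL₂ of the algebraic closure of F_ℓ. Then the sum over all elements of A, taken in the matrix ring M₂(F̄_ℓ), is the zero matrix. -/

import Mathlib

/-!
Write `S = ∑ a` over `A`. Since `A` is a group, `g * S = S` for every `g ∈ A`, and reindexing by
inversion gives `2 • S = ∑ (a + a⁻¹) = t • 1` with `t = ∑ tr a`, because `g + g⁻¹ = tr g • 1` in
`SL₂` (Cayley–Hamilton). Hence `t • g = g * (2 • S) = 2 • S = t • 1` for all `g ∈ A`; as `A` is
nontrivial this forces `t = 0`, so `2 • S = 0`, and `S = 0` because `2` is invertible.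
-/

open Matrix

open scoped MatrixGroups

theorem Matrix.add_adjugate_fin_two {R : Type*} [CommRing R] (M : Matrix (Fin 2) (Fin 2) R) :
    M + adjugate M = trace M • (1 : Matrix (Fin 2) (Fin 2) R) := by
  rw [adjugate_fin_two, trace_fin_two]
  ext i j
  fin_cases i <;> fin_cases j <;> simp [add_comm]

theorem Matrix.SpecialLinearGroup.coe_add_coe_inv_fin_two {R : Type*} [CommRing R] (g : SL(2, R)) :
    (g : Matrix (Fin 2) (Fin 2) R) + ↑g⁻¹ = trace (g : Matrix (Fin 2) (Fin 2) R) • 1 := by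
  rw [SpecialLinearGroup.coe_inv, add_adjugate_fin_two]

theorem Fintype.mul_sum_monoidHom {G R : Type*} [Group G] [Fintype G] [Semiring R]
    (ρ : G →* R) (g : G) : ρ g * ∑ a, ρ a = ∑ a, ρ a := by
  rw [Finset.mul_sum]
  exact Fintype.sum_equiv (Equiv.mulLeft g) _ _ fun a => (map_mul ρ g a).symm

namespace Matrix.SpecialLinearGroup

theorem two_smul_sum_subgroup_fin_two {R : Type*} [CommRing R] (A : Subgroup SL(2, R))
    [Fintype A] :
    (2 : R) • ∑ a : A, ((a : SL(2, R)) : Matrix (Fin 2) (Fin 2) R) =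
      (∑ a : A, trace ((a : SL(2, R)) : Matrix (Fin 2) (Fin 2) R)) • 1 := by
  have sum_inv : ∑ a : A, ((a⁻¹ : A) : Matrix (Fin 2) (Fin 2) R) = ∑ a : A, (a : Matrix _ _ R) :=
    Fintype.sum_equiv (Equiv.inv A) _ _ fun _ => rfl
  rw [two_smul]
  nth_rw 2 [← sum_inv]
  rw [← Finset.sum_add_distrib, Finset.sum_smul]
  exact Finset.sum_congr rfl fun a _ => coe_add_coe_inv_fin_two (a : SL(2, R))

theorem sum_subgroup_fin_two_eq_zero {K : Type*} [Field K] (h2 : (2 : K) ≠ 0) (A : Subgroup SL(2, K)) [Fintype A]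
    (hA : A ≠ ⊥) :
    ∑ a : A, ((a : SL(2, K)) : Matrix (Fin 2) (Fin 2) K) = 0 := by
  set S := ∑ a : A, ((a : SL(2, K)) : Matrix (Fin 2) (Fin 2) K)
  set t := ∑ a : A, trace ((a : SL(2, K)) : Matrix (Fin 2) (Fin 2) K)
  have hS : (2 : K) • S = t • 1 := two_smul_sum_subgroup_fin_two A
  have mul_S (g : A) : (g : Matrix (Fin 2) (Fin 2) K) * S = S :=
    Fintype.mul_sum_monoidHom ((coeMonoidHom).comp A.subtype) g
  suffices ht : t = 0 by
    rwa [ht, zero_smul, smul_eq_zero, or_iff_right h2] at hS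
  by_contra ht
  obtain ⟨g, hg⟩ := (Subgroup.ne_bot_iff_exists_ne_one).mp hA
  refine hg (Subtype.ext (Subtype.ext (smul_right_injective _ ht ?_)))
  calc t • (g : Matrix (Fin 2) (Fin 2) K) = (g : Matrix (Fin 2) (Fin 2) K) * ((2 : K) • S) := by
        rw [hS, Matrix.mul_smul, mul_one]
    _ = t • 1 := by rw [Matrix.mul_smul, mul_S, hS]

end Matrix.SpecialLinearGroup

/-- Let ℓ be an odd prime and A a nontrivial finite subgroup of
SL₂ of the algebraic closure of F_ℓ. Then the sum over all elements of A,
taken in the matrix ring M₂(F̄_ℓ), is the zero matrix. -/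
theorem sum_of_finite_subgroup_SL2_eq_zero
    (ℓ : ℕ) [Fact ℓ.Prime] (hℓ : ℓ ≠ 2)
    (A : Subgroup (Matrix.SpecialLinearGroup (Fin 2) (AlgebraicClosure (ZMod ℓ))))
    [Fintype A] (hA : A ≠ ⊥) :
    ∑ a : A, ((a : Matrix.SpecialLinearGroup (Fin 2) (AlgebraicClosure (ZMod ℓ))) :
      Matrix (Fin 2) (Fin 2) (AlgebraicClosure (ZMod ℓ))) = 0 :=
  SpecialLinearGroup.sum_subgroup_fin_two_eq_zero
    (Ring.two_ne_zero (by rwa [ringChar.eq (AlgebraicClosure (ZMod ℓ)) ℓ])) A hA
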